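/- arXiv:1001.4856 — 4 statements merged into one kernel-verified Lean document; each statement's English description precedes it below -/
import Mathlib

section
/- Let N be a compact topological group that is nilpotent of class at most 2 and whose commutator subgroup N' is discrete. Then the center Z(N) is open (hence of finite index) in N. -/
/-!
The commutator map `N × N → [N, N]` is continuous into a discrete space, so the set of commuting
pairs is open. It contains the compact set `N × {1}`, so by the tube lemma it contains `N × U` for
some neighbourhood `U` of `1`; thus `U` lies in the center, which is therefore an open subgroup,
and open subgroups of a compact group have finite index.
-/

open scoped commutatorElement

namespace Subgroup

variable {G : Type*} [Group G] [TopologicalSpace G]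

theorem isOpen_setOf_commute_of_discreteTopology_commutator [IsTopologicalGroup G]
    [DiscreteTopology (_root_.commutator G)] : IsOpen {p : G × G | Commute p.1 p.2} := by
  let f : G × G → _root_.commutator G := fun p =>
    ⟨⁅p.1, p.2⁆, commutator_mem_commutator (mem_top p.1) (mem_top p.2)⟩
  have hf : Continuous f := by
    refine Continuous.subtype_mk ?_ _
    simp only [commutatorElement_def]
    fun_prop
  convert (isOpen_discrete {1}).preimage hf using 1
  ext p
  simp [f, ← commutatorElement_eq_one_iff_commute, Subtype.ext_iff]

theorem isOpen_center_of_isOpen_setOf_commute [SeparatelyContinuousMul G] [CompactSpace G]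
    (h : IsOpen {p : G × G | Commute p.1 p.2}) : IsOpen (center G : Set G) := by
  have hslice : (Set.univ : Set G) ×ˢ {1} ⊆ {p : G × G | Commute p.1 p.2} := by
    rintro ⟨a, b⟩ ⟨-, rfl : b = 1⟩
    exact Commute.one_right a
  obtain ⟨V, U, -, hU, hV, h1U, hVU⟩ :=
    generalized_tube_lemma isCompact_univ isCompact_singleton h hslice
  refine isOpen_of_mem_nhds _ (Filter.mem_of_superset (hU.mem_nhds (h1U rfl)) fun b hb => ?_)
  exact mem_center_iff.mpr fun a =>
    (hVU (Set.mk_mem_prod (hV (Set.mem_univ a)) hb) : Commute a b).eq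

end Subgroup

theorem center_open_of_class_two_discrete_commutator_general {N : Type*} [Group N]
    [TopologicalSpace N] [IsTopologicalGroup N] [CompactSpace N]
    (hd : DiscreteTopology (commutator N)) :
    IsOpen ((Subgroup.center N : Subgroup N) : Set N) ∧
      (Subgroup.center N).FiniteIndex := by
  have hopen : IsOpen ((Subgroup.center N : Subgroup N) : Set N) :=
    Subgroup.isOpen_center_of_isOpen_setOf_commute
      Subgroup.isOpen_setOf_commute_of_discreteTopology_commutator
  have : Finite (N ⧸ Subgroup.center N) := Subgroup.quotient_finite_of_isOpen _ hopen
  exact ⟨hopen, Subgroup.finiteIndex_of_finite_quotient⟩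

/-- If `N` is a compact topological group that is nilpotent of class at most 2 (i.e.
`[N,N] ≤ Z(N)`) and its commutator subgroup is discrete, then the center of `N` is open
and of finite index. -/
theorem center_open_of_class_two_discrete_commutator {N : Type*} [Group N]
    [TopologicalSpace N] [IsTopologicalGroup N] [CompactSpace N]
    (h2 : commutator N ≤ Subgroup.center N)
    (hd : DiscreteTopology (commutator N)) :
    IsOpen ((Subgroup.center N : Subgroup N) : Set N) ∧
      (Subgroup.center N).FiniteIndex :=
  center_open_of_class_two_discrete_commutator_general hd
end

section
/- A compact topological group G is an FC-group (every conjugacy class is finite) if and only if its center Z(G) is open in G (equivalently, G/Z(G) is finite). -/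
/-!
In an FC-group every centralizer `C(g)` is closed of finite index, hence open, so its complement
is compact and the tube lemma gives `C(h) ≤ C(g)` for all `h` near `g`: the index `[G : C(g)]` is
lower semicontinuous in `g`. By Baire it has a local maximum `g`, near which `C(h) = C(g)`.
Hence `C(C(g))` is a neighbourhood of `g`, so `A = C(g) ∩ C(C(g))` is an open abelian subgroup.
The elements of `A` commuting with a (finite) set of representatives of `G ⧸ A` form an open
subgroup of the centre.
-/

open Filter Topology

theorem LowerSemicontinuous.exists_isLocalMax {X : Type*} [TopologicalSpace X] [BaireSpace X]
    [Nonempty X] {f : X → ℕ} (hf : LowerSemicontinuous f) : ∃ x, IsLocalMax f x := by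
  have hcover : ⋃ n, f ⁻¹' Set.Iic n = Set.univ :=
    Set.iUnion_eq_univ_iff.2 fun x => ⟨f x, Set.mem_preimage.2 Set.self_mem_Iic⟩
  obtain ⟨n, x, hx⟩ :=
    nonempty_interior_of_iUnion_of_closed (fun n => hf.isClosed_preimage n) hcover
  set U := interior (f ⁻¹' Set.Iic n)
  have hbdd : BddAbove (f '' U) :=
    ⟨n, fun _ ⟨y, hy, hfy⟩ => hfy ▸ (interior_subset hy : y ∈ f ⁻¹' Set.Iic n)⟩
  obtain ⟨x₀, hx₀, hmax⟩ := Nat.sSup_mem ⟨_, Set.mem_image_of_mem f hx⟩ hbdd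
  exact ⟨x₀, mem_of_superset (isOpen_interior.mem_nhds hx₀) fun y hy =>
    hmax ▸ le_csSup hbdd (Set.mem_image_of_mem f hy)⟩

def IsFCGroup (G : Type*) [Group G] : Prop :=
  ∀ g : G, {y : G | IsConj g y}.Finite

namespace Subgroup

variable {G : Type*} [Group G]

theorem index_centralizer_singleton (g : G) :
    (centralizer {g}).index = {y | IsConj g y}.ncard := by
  have hconj : MulAction.orbit (ConjAct G) g = {y | IsConj g y} := by
    ext y
    exact ConjAct.mem_orbit_conjAct.trans isConj_comm
  rw [centralizer_eq_comap_stabilizer, ← hconj, ← MulAction.index_stabilizer]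
  exact index_comap_of_surjective _ ConjAct.toConjAct.surjective

theorem finiteIndex_centralizer_singleton_iff (g : G) :
    (centralizer {g}).FiniteIndex ↔ {y | IsConj g y}.Finite := by
  rw [finiteIndex_iff, index_centralizer_singleton]
  exact ⟨fun h => Set.not_infinite.1 fun hinf => h hinf.ncard,
    fun h => Set.ncard_ne_zero_of_mem (IsConj.refl g) h⟩

theorem inf_iInf_centralizer_out_le_center {A : Subgroup G} (hA : A ≤ centralizer A) :
    A ⊓ ⨅ q : G ⧸ A, centralizer {q.out} ≤ center G := by
  intro z hz
  rw [mem_center_iff]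
  intro g
  obtain ⟨a, hout⟩ := QuotientGroup.mk_out_eq_mul A g
  have hq : z * (g * a) = (g * a) * z :=
    hout ▸ mem_centralizer_singleton_iff.1 (mem_iInf.1 hz.2 _)
  have ha : (a : G) * z = z * a := hA hz.1 a a.2
  refine mul_right_cancel (b := (a : G)) ?_
  rw [mul_assoc, ← ha, ← mul_assoc, ← hq, mul_assoc]

end Subgroup

namespace IsFCGroup

open Subgroup

variable {G : Type*} [Group G]

theorem of_finite_quotient_center [Finite (G ⧸ center G)] : IsFCGroup G := fun g =>
  have := finiteIndex_of_finite_quotient (H := center G)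
  have : (centralizer {g}).FiniteIndex := finiteIndex_of_le (center_le_centralizer {g})
  (finiteIndex_centralizer_singleton_iff g).1 this

theorem finiteIndex_centralizer (hG : IsFCGroup G) (g : G) : (centralizer {g}).FiniteIndex :=
  (finiteIndex_centralizer_singleton_iff g).2 (hG g)

variable [TopologicalSpace G] [IsTopologicalGroup G] [T2Space G]

theorem isOpen_centralizer (hG : IsFCGroup G) (g : G) : IsOpen (centralizer {g} : Set G) :=
  have := hG.finiteIndex_centralizer g
  isOpen_of_isClosed_of_finiteIndex _ (Set.isClosed_centralizer _)

variable [CompactSpace G]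

theorem eventually_centralizer_le (hG : IsFCGroup G) (g : G) :
    ∀ᶠ h in 𝓝 g, centralizer {h} ≤ centralizer {g} := by
  have hK : IsCompact (centralizer {g} : Set G)ᶜ :=
    (hG.isOpen_centralizer g).isClosed_compl.isCompact
  have hnc : ∀ y ∈ (centralizer {g} : Set G)ᶜ,
      ∀ᶠ p : G × G in 𝓝 (g, y), p.2 * p.1 ≠ p.1 * p.2 := fun y hy =>
    (ContinuousAt.ne_iff_eventually_ne (by fun_prop) (by fun_prop)).1
      (mt mem_centralizer_singleton_iff.2 hy)
  filter_upwards [hK.eventually_forall_of_forall_eventually (P := fun h y => y * h ≠ h * y) hnc]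
    with h hh y hy
  by_contra hyg
  exact hh y hyg (mem_centralizer_singleton_iff.1 hy)

theorem lowerSemicontinuous_index_centralizer (hG : IsFCGroup G) :
    LowerSemicontinuous fun g : G => (centralizer {g}).index := fun g n hn => by
  filter_upwards [hG.eventually_centralizer_le g] with h hle
  have := hG.finiteIndex_centralizer h
  exact hn.trans_le (index_antitone hle :)

theorem exists_isOpen_le_centralizer (hG : IsFCGroup G) :
    ∃ A : Subgroup G, IsOpen (A : Set G) ∧ A ≤ centralizer A := by
  obtain ⟨g, hmax⟩ := hG.lowerSemicontinuous_index_centralizer.exists_isLocalMax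
  have hloc : ∀ᶠ h in 𝓝 g, centralizer {h} = centralizer {g} := by
    filter_upwards [hmax, hG.eventually_centralizer_le g] with h hindex hle
    have := hG.finiteIndex_centralizer h
    exact hle.eq_of_not_lt fun hlt => (index_strictAnti hlt).not_ge hindex
  have hopen : IsOpen (centralizer (centralizer {g} : Set G) : Set G) := by
    refine isOpen_of_mem_nhds _ (hloc.mono fun h hh => mem_centralizer_iff.2 fun y hy => ?_)
    exact mem_centralizer_singleton_iff.1 (hh ▸ hy)
  refine ⟨centralizer {g} ⊓ centralizer (centralizer {g} : Set G),
    (hG.isOpen_centralizer g).inter hopen, ?_⟩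
  exact fun a ha => centralizer_le inf_le_left ha.2

theorem isOpen_center (hG : IsFCGroup G) : IsOpen (center G : Set G) := by
  obtain ⟨A, hA, hAcomm⟩ := hG.exists_isOpen_le_centralizer
  have := A.quotient_finite_of_isOpen hA
  have hopen : IsOpen ((A ⊓ ⨅ q : G ⧸ A, centralizer {q.out} : Subgroup G) : Set G) := by
    rw [coe_inf, coe_iInf]
    exact hA.inter (isOpen_iInter_of_finite fun q => hG.isOpen_centralizer _)
  exact isOpen_mono (inf_iInf_centralizer_out_le_center hAcomm) hopen

end IsFCGroup

/-- A compact topological group is an FC-group (every conjugacy class is finite) iff its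
center is open, equivalently iff `G/Z(G)` is finite. -/
theorem compact_fc_iff_center_open {G : Type*} [Group G] [TopologicalSpace G]
    [IsTopologicalGroup G] [CompactSpace G] [T2Space G] :
    ((∀ g : G, {y : G | IsConj g y}.Finite) ↔
      IsOpen ((Subgroup.center G : Subgroup G) : Set G)) ∧
    ((∀ g : G, {y : G | IsConj g y}.Finite) ↔ Finite (G ⧸ Subgroup.center G)) := by
  have hopen : IsFCGroup G → IsOpen (Subgroup.center G : Set G) := fun h => h.isOpen_center
  have hfinite : IsOpen (Subgroup.center G : Set G) → Finite (G ⧸ Subgroup.center G) :=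
    (Subgroup.center G).quotient_finite_of_isOpen
  have hFC : Finite (G ⧸ Subgroup.center G) → IsFCGroup G := fun _ =>
    IsFCGroup.of_finite_quotient_center
  exact ⟨⟨hopen, hFC ∘ hfinite⟩, ⟨hfinite ∘ hopen, hFC⟩⟩
end

section
/- Let G be a compact Lie group and g ∈ G. The power map p_n is constant (equal to 1) on the whole connected component gG₀ if and only if gⁿ = 1 and every eigenvalue of Ad(g) is an n-th root of unity different from 1. -/
/-!
If `xⁿ = 1` on `g G₀`, then `x ↦ (g x)ⁿ g⁻ⁿ = ∏_{k=1}^{n} gᵏ x g⁻ᵏ` is constant near `1`, and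
differentiating at `1` gives `∑_{k=1}^{n} Ad(g)ᵏ = 0`; together with `Ad(g)ⁿ = Ad(gⁿ) = 1`, every
eigenvalue `μ` satisfies `μⁿ = 1` and `∑_{k=1}^{n} μᵏ = 0`, which rules out `μ = 1`.

Conversely, if `1` is not an eigenvalue of `Ad(g)`, the map `x ↦ x g x⁻¹ g⁻¹` has surjective
differential `1 - Ad(g)` at `1`, so the conjugacy class of `g` is a neighbourhood of `g`. Being
homogeneous it is open, being compact it is closed, so it contains `g G₀`; and every conjugate of
`g` has `n`-th power `1` since `gⁿ = 1`.
-/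

open Filter Polynomial Topology
open scoped Manifold commutatorElement

theorem Module.End.aeval_eq_zero_of_hasEigenvalue_baseChange {R A M : Type*} [CommRing R]
    [Field A] [Algebra R A] [AddCommGroup M] [Module R M] {f : Module.End R M} {p : R[X]}
    (hp : aeval f p = 0) {μ : A} (hμ : HasEigenvalue (f.baseChange A) μ) : aeval μ p = 0 := by
  obtain ⟨v, hv⟩ := hμ.exists_hasEigenvector
  have hpA : aeval (f.baseChange A) p = 0 := by
    rw [← map_zero (baseChangeHom R A M), ← hp, ← aeval_algHom_apply]
    rfl
  have hpv : aeval (f.baseChange A) (p.map (algebraMap R A)) v = 0 := by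
    rw [aeval_map_algebraMap, hpA, LinearMap.zero_apply]
  rw [aeval_apply_of_hasEigenvector hv, eval_map_algebraMap] at hpv
  exact (smul_eq_zero.1 hpv).resolve_right hv.2

theorem Module.End.pow_eq_one_and_ne_one_of_hasEigenvalue_baseChange {R A M : Type*} [CommRing R]
    [Field A] [CharZero A] [Algebra R A] [AddCommGroup M] [Module R M] {f : Module.End R M}
    {n : ℕ} (hn : 0 < n) (hpow : f ^ n = 1) (hsum : ∑ k ∈ Finset.range n, f ^ (k + 1) = 0)
    {μ : A} (hμ : HasEigenvalue (f.baseChange A) μ) : μ ^ n = 1 ∧ μ ≠ 1 := by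
  have hroot := aeval_eq_zero_of_hasEigenvalue_baseChange (p := X ^ n - 1) (by simp [hpow]) hμ
  have hgeom := aeval_eq_zero_of_hasEigenvalue_baseChange
    (p := ∑ k ∈ Finset.range n, X ^ (k + 1)) (by simp [map_sum, hsum]) hμ
  refine ⟨by simpa [sub_eq_zero] using hroot, fun h1 => hn.ne' ?_⟩
  simpa [h1] using hgeom

theorem Module.End.hasEigenvalue_baseChange_algebraMap_iff {K L V : Type*} [Field K] [Field L]
    [Algebra K L] [AddCommGroup V] [Module K V] [FiniteDimensional K V] (f : Module.End K V)
    (μ : K) : HasEigenvalue (f.baseChange L) (algebraMap K L μ) ↔ f.HasEigenvalue μ := by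
  rw [hasEigenvalue_iff_isRoot_charpoly, hasEigenvalue_iff_isRoot_charpoly,
    LinearMap.charpoly_baseChange, IsRoot.def, IsRoot.def, eval_map_algebraMap,
    aeval_algebraMap_apply, map_eq_zero_iff _ (algebraMap K L).injective, coe_aeval_eq_eval]

theorem Module.End.surjective_one_sub_of_not_hasEigenvalue_baseChange_one {K L V : Type*}
    [Field K] [Field L] [Algebra K L] [AddCommGroup V] [Module K V] [FiniteDimensional K V]
    {f : Module.End K V} (h : ¬ HasEigenvalue (f.baseChange L) 1) :
    Function.Surjective ⇑(1 - f) := by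
  rw [← map_one (algebraMap K L), hasEigenvalue_baseChange_algebraMap_iff,
    hasEigenvalue_iff_mem_spectrum, spectrum.mem_iff, not_not, map_one] at h
  exact ((isUnit_iff _).1 h).2

theorem isOpen_range_conj_of_mem_nhds {G : Type*} [Group G] [TopologicalSpace G]
    [IsTopologicalGroup G] {g : G} (h : Set.range (fun y => y * g * y⁻¹) ∈ 𝓝 g) :
    IsOpen (Set.range (fun y => y * g * y⁻¹)) := by
  refine isOpen_iff_mem_nhds.2 ?_
  rintro _ ⟨x, rfl⟩
  have hx := smul_mem_nhds_smul (ConjAct.toConjAct x) h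
  rw [ConjAct.toConjAct_smul] at hx
  refine mem_of_superset hx ?_
  rintro _ ⟨_, ⟨y, rfl⟩, rfl⟩
  exact ⟨x * y, by simp only [ConjAct.toConjAct_smul]; group⟩

theorem connectedComponent_subset_range_conj {G : Type*} [Group G] [TopologicalSpace G]
    [IsTopologicalGroup G] [CompactSpace G] [T2Space G] {g : G}
    (h : Set.range (fun y => y * g * y⁻¹) ∈ 𝓝 g) :
    connectedComponent g ⊆ Set.range (fun y => y * g * y⁻¹) :=
  IsClopen.connectedComponent_subset
    ⟨(isCompact_range (by fun_prop)).isClosed, isOpen_range_conj_of_mem_nhds h⟩ ⟨1, by simp⟩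

section Charted

variable {E : Type*} [NormedAddCommGroup E] [NormedSpace ℝ E] {M : Type*} [TopologicalSpace M]
  [ChartedSpace E M]

-- Both tangent spaces are read as `E`, so that differentials at points that are only
-- propositionally equal (such as `x` and `f x`) can be added and composed.
variable (E) in
noncomputable def mfderivEnd (f : M → M) (x : M) : E →L[ℝ] E :=
  mfderiv 𝓘(ℝ, E) 𝓘(ℝ, E) f x

theorem mfderivEnd_comp {f h : M → M} {x y : M} (hy : h x = y)
    (hf : MDifferentiableAt 𝓘(ℝ, E) 𝓘(ℝ, E) f y) (hh : MDifferentiableAt 𝓘(ℝ, E) 𝓘(ℝ, E) h x) :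
    mfderivEnd E (f ∘ h) x = (mfderivEnd E f y).comp (mfderivEnd E h x) := by
  subst hy
  exact mfderiv_comp x hf hh

theorem mfderivEnd_id (x : M) : mfderivEnd E id x = 1 :=
  mfderiv_id

theorem mfderivEnd_const (c x : M) : mfderivEnd E (fun _ => c) x = 0 :=
  mfderiv_const

end Charted

theorem map_nhds_eq_of_surjective_mfderiv {E F M N : Type*} [NormedAddCommGroup E]
    [NormedSpace ℝ E] [CompleteSpace E] [NormedAddCommGroup F] [NormedSpace ℝ F] [CompleteSpace F]
    [TopologicalSpace M] [ChartedSpace E M] [TopologicalSpace N] [ChartedSpace F N] {f : M → N}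
    {x : M} (hf : ContMDiffAt 𝓘(ℝ, E) 𝓘(ℝ, F) 1 f x)
    (h : Function.Surjective (mfderiv 𝓘(ℝ, E) 𝓘(ℝ, F) f x)) :
    map f (𝓝 x) = 𝓝 (f x) := by
  set c := chartAt E x
  set c' := chartAt F (f x)
  set φ := c' ∘ f ∘ c.symm
  have hφ : ContDiffAt ℝ 1 φ (c x) := by
    simpa [contDiffWithinAt_univ] using (contMDiffAt_iff.1 hf).2
  have hmf : mfderiv 𝓘(ℝ, E) 𝓘(ℝ, F) f x = fderiv ℝ φ (c x) := by
    rw [(hf.mdifferentiableAt one_ne_zero).mfderiv]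
    simp [fderivWithin_univ]
    rfl
  have hmap_φ : map φ (𝓝 (c x)) = 𝓝 (φ (c x)) :=
    (hφ.hasStrictFDerivAt one_ne_zero).map_nhds_eq_of_surj (LinearMap.range_eq_top.2 (hmf ▸ h))
  have hf_eq : f =ᶠ[𝓝 x] c'.symm ∘ φ ∘ c := by
    filter_upwards [c.open_source.mem_nhds (mem_chart_source E x),
      hf.continuousAt.preimage_mem_nhds (c'.open_source.mem_nhds (mem_chart_source F (f x)))]
      with y hy hfy
    simp [φ, c.left_inv hy, c'.left_inv hfy]
  rw [map_congr hf_eq, ← map_map, ← map_map, c.map_nhds_eq (mem_chart_source E x), hmap_φ]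
  simpa [φ, c.left_inv (mem_chart_source E x)] using c'.symm_map_nhds_eq (mem_chart_source F (f x))

section LieGroup

variable {E : Type*} [NormedAddCommGroup E] [NormedSpace ℝ E] {G : Type*} [TopologicalSpace G]
  [ChartedSpace E G] [Group G]

variable (E) in
noncomputable def Ad (g : G) : E →L[ℝ] E :=
  mfderivEnd E (fun x => g * x * g⁻¹) 1

theorem Ad_one : Ad E (1 : G) = 1 := by
  simp only [Ad, one_mul, inv_one, mul_one]
  exact mfderivEnd_id 1

variable [LieGroup 𝓘(ℝ, E) (⊤ : ℕ∞) G]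

theorem mfderiv_mul_one_one :
    mfderiv (𝓘(ℝ, E).prod 𝓘(ℝ, E)) 𝓘(ℝ, E) (fun z : G × G => z.1 * z.2) (1, 1) =
      ContinuousLinearMap.fst ℝ E E + ContinuousLinearMap.snd ℝ E E := by
  rw [mfderiv_prod_eq_add_comp ((contMDiff_mul 𝓘(ℝ, E) (⊤ : ℕ∞)).mdifferentiableAt (by simp))]
  rw [show (fun z : G => z * 1) = id from funext mul_one,
    show (fun z : G => 1 * z) = id from funext one_mul, mfderiv_id]
  rfl

theorem mfderivEnd_mul {f h : G → G} {x : G} (hf : MDifferentiableAt 𝓘(ℝ, E) 𝓘(ℝ, E) f x)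
    (hh : MDifferentiableAt 𝓘(ℝ, E) 𝓘(ℝ, E) h x) (hfx : f x = 1) (hhx : h x = 1) :
    mfderivEnd E (fun y => f y * h y) x = mfderivEnd E f x + mfderivEnd E h x := by
  have hmul : MDifferentiableAt (𝓘(ℝ, E).prod 𝓘(ℝ, E)) 𝓘(ℝ, E)
      (fun z : G × G => z.1 * z.2) (f x, h x) :=
    (contMDiff_mul 𝓘(ℝ, E) (⊤ : ℕ∞)).mdifferentiableAt (by simp)
  have hcomp := mfderiv_comp x hmul (hf.prodMk hh)
  rw [hf.mfderiv_prod hh, hfx, hhx, mfderiv_mul_one_one] at hcomp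
  exact hcomp

theorem mfderivEnd_inv_one : mfderivEnd E (fun x : G => x⁻¹) 1 = -ContinuousLinearMap.id ℝ E := by
  have h := mfderivEnd_mul (E := E) (f := id) (h := fun x : G => x⁻¹) mdifferentiableAt_id
    ((contMDiff_inv 𝓘(ℝ, E) ((⊤ : ℕ∞) : WithTop ℕ∞)).mdifferentiableAt (by simp)) rfl inv_one
  simp only [id, mul_inv_cancel] at h
  rw [mfderivEnd_const, mfderivEnd_id] at h
  exact (neg_eq_of_add_eq_zero_right h.symm).symm

theorem contMDiff_conj (g : G) : ContMDiff 𝓘(ℝ, E) 𝓘(ℝ, E) (⊤ : ℕ∞) (fun x => g * x * g⁻¹) :=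
  contMDiff_mul_right.comp contMDiff_mul_left

theorem Ad_mul (g h : G) : Ad E (g * h) = Ad E g * Ad E h := by
  have hcomp := mfderivEnd_comp (y := 1) (by simp)
    ((contMDiff_conj (E := E) g).mdifferentiableAt (by simp))
    ((contMDiff_conj (E := E) h).mdifferentiableAt (by simp) (x := 1))
  simp only [Function.comp_def] at hcomp
  rw [Ad, Ad, Ad, ContinuousLinearMap.mul_def, ← hcomp]
  congr 1
  ext x
  group

theorem Ad_pow (g : G) (n : ℕ) : Ad E (g ^ n) = Ad E g ^ n := by
  induction n with
  | zero => rw [pow_zero, pow_zero, Ad_one]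
  | succ n ih => rw [pow_succ, Ad_mul, ih, pow_succ]

theorem mfderivEnd_mul_left_pow_mul_inv (g : G) (m : ℕ) :
    mfderivEnd E (fun x => (g * x) ^ m * (g ^ m)⁻¹) 1 = ∑ k ∈ Finset.range m, Ad E g ^ (k + 1) := by
  induction m with
  | zero =>
    simp only [pow_zero, inv_one, mul_one, Finset.range_zero, Finset.sum_empty]
    exact mfderivEnd_const 1 1
  | succ m ih =>
    have hsplit : (fun x => (g * x) ^ (m + 1) * (g ^ (m + 1))⁻¹) =
        fun x => (g * x) ^ m * (g ^ m)⁻¹ * (g ^ (m + 1) * x * (g ^ (m + 1))⁻¹) := by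
      ext x
      simp only [pow_succ]
      group
    have hsmooth : ContMDiff 𝓘(ℝ, E) 𝓘(ℝ, E) (⊤ : ℕ∞) (fun x : G => (g * x) ^ m * (g ^ m)⁻¹) :=
      ((contMDiff_pow m).comp contMDiff_mul_left).mul contMDiff_const
    rw [hsplit, mfderivEnd_mul (hsmooth.mdifferentiableAt (by simp))
      ((contMDiff_conj _).mdifferentiableAt (by simp)) (by simp) (by simp), ih,
      Finset.sum_range_succ, ← Ad_pow]
    rfl

theorem mfderivEnd_commutatorElement_left (g : G) :
    mfderivEnd E (fun x => ⁅x, g⁆) 1 = 1 - Ad E g := by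
  have hinv := (contMDiff_inv 𝓘(ℝ, E) ((⊤ : ℕ∞) : WithTop ℕ∞) (G := G)).mdifferentiableAt
    (x := 1) (by simp)
  have hconj := (contMDiff_conj (E := E) g).mdifferentiableAt (x := 1) (by simp)
  have hcomp := mfderivEnd_comp inv_one hconj hinv
  have hmul := mfderivEnd_mul (E := E) (f := id) (h := (fun x => g * x * g⁻¹) ∘ fun x => x⁻¹)
    mdifferentiableAt_id (hconj.comp_of_eq (x := 1) hinv inv_one) rfl (by simp)
  simp only [id, Function.comp_def, ← mul_assoc] at hmul hcomp
  simp only [commutatorElement_def]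
  rw [hmul, hcomp, mfderivEnd_inv_one, mfderivEnd_id, ← Ad]
  ext v
  simp [sub_eq_add_neg]

theorem map_conj_nhds_one [IsTopologicalGroup G] [CompleteSpace E] {g : G}
    (h : Function.Surjective ⇑(1 - Ad E g)) :
    map (fun y => y * g * y⁻¹) (𝓝 1) = 𝓝 g := by
  have hsmooth : ContMDiff 𝓘(ℝ, E) 𝓘(ℝ, E) 1 (fun x : G => ⁅x, g⁆) := by
    simp only [commutatorElement_def]
    exact ((contMDiff_id.mul contMDiff_const).mul (contMDiff_inv 𝓘(ℝ, E) 1)).mul contMDiff_const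
  have hcomm : map (fun x : G => ⁅x, g⁆) (𝓝 1) = 𝓝 1 := by
    have := map_nhds_eq_of_surjective_mfderiv hsmooth.contMDiffAt
      (mfderivEnd_commutatorElement_left (E := E) g ▸ h)
    rwa [commutatorElement_one_left] at this
  have hconj : (fun y => y * g * y⁻¹) = (· * g) ∘ fun x : G => ⁅x, g⁆ := by
    ext y
    simp [commutatorElement_def]
  rw [hconj, ← map_map, hcomm, map_mul_right_nhds_one]

theorem sum_Ad_pow_eq_zero {g : G} {n : ℕ} (h : (fun x => x ^ n) =ᶠ[𝓝 g] fun _ => 1) :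
    ∑ k ∈ Finset.range n, Ad E g ^ (k + 1) = 0 := by
  have hgn : g ^ n = 1 := h.eq_of_nhds
  have hlocal : (fun x => (g * x) ^ n * (g ^ n)⁻¹) =ᶠ[𝓝 1] fun _ => 1 := by
    have htendsto : Tendsto (g * ·) (𝓝 1) (𝓝 g) := by
      simpa using (contMDiff_mul_left (I := 𝓘(ℝ, E)) (n := 1) (a := g)).continuous.tendsto 1
    filter_upwards [htendsto.eventually h] with x hx
    simp [hx, hgn]
  rw [← mfderivEnd_mul_left_pow_mul_inv, mfderivEnd, hlocal.mfderiv_eq]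
  exact mfderivEnd_const 1 1

end LieGroup

/-- For a compact Lie group `G` and `g ∈ G`, the power map `p_n(x) = xⁿ` is constant equal
to `1` on the whole connected component `g G₀` if and only if `gⁿ = 1` and every eigenvalue
of `Ad(g)` (the differential at `1` of conjugation by `g`) on the complexified Lie algebra
is an `n`-th root of unity different from `1`. -/
theorem power_map_totally_singular_iff {E : Type*} [NormedAddCommGroup E] [NormedSpace ℝ E]
    [FiniteDimensional ℝ E] {G : Type*} [TopologicalSpace G] [ChartedSpace E G]
    [Group G] [IsTopologicalGroup G] [LieGroup 𝓘(ℝ, E) (⊤ : ℕ∞) G] [CompactSpace G] [T2Space G]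
    (n : ℕ) (hn : 1 ≤ n) (g : G) :
    (∀ x ∈ connectedComponent g, x ^ n = 1) ↔
      (g ^ n = 1 ∧
        ∀ μ : ℂ,
          Module.End.HasEigenvalue
            (LinearMap.baseChange ℂ
              (ContinuousLinearMap.toLinearMap
                (show E →L[ℝ] E from
                  mfderiv 𝓘(ℝ, E) 𝓘(ℝ, E) (fun x : G => g * x * g⁻¹) (1 : G)))) μ →
          μ ^ n = 1 ∧ μ ≠ 1) := by
  change _ ↔ _ ∧ ∀ μ : ℂ, Module.End.HasEigenvalue ((Ad E g : E →ₗ[ℝ] E).baseChange ℂ) μ → _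
  constructor
  · intro hpow
    have hloc : (fun x => x ^ n) =ᶠ[𝓝 g] fun _ => 1 := by
      have := ChartedSpace.locallyConnectedSpace E G
      filter_upwards [isOpen_connectedComponent.mem_nhds mem_connectedComponent] using hpow
    have hgn : g ^ n = 1 := hloc.eq_of_nhds
    refine ⟨hgn, fun μ hμ =>
      Module.End.pow_eq_one_and_ne_one_of_hasEigenvalue_baseChange hn ?_ ?_ hμ⟩
    · rw [← ContinuousLinearMap.toLinearMap_pow, ← Ad_pow, hgn, Ad_one,
        ContinuousLinearMap.toLinearMap_one]
    · simpa [map_sum] using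
        congrArg ContinuousLinearMap.toLinearMapRingHom (sum_Ad_pow_eq_zero (E := E) hloc)
  · rintro ⟨hgn, hμ⟩ x hx
    have hsurj : Function.Surjective ⇑(1 - Ad E g) :=
      Module.End.surjective_one_sub_of_not_hasEigenvalue_baseChange_one fun h1 => (hμ 1 h1).2 rfl
    obtain ⟨y, rfl⟩ := connectedComponent_subset_range_conj
      (map_conj_nhds_one hsurj ▸ range_mem_map) hx
    simp [conj_pow, hgn]
end

section
/- Let G be a compact group, N a closed normal subgroup, and fix natural numbers n₁, n₂. Then the probability (with respect to Haar measure on G×G) that [x^{n₁}, y^{n₂}] ∈ N is equal to the probability (with respect to Haar measure on (G/N)×(G/N)) that [u^{n₁}, v^{n₂}] = 1; in particular the generalized commutativity degree of G/N is at least that of G. -/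
/-!
Pushing the Haar measure of `G` forward along `G → G ⧸ N` gives the Haar measure of `G ⧸ N`,
and the set where `[x^{n₁}, y^{n₂}] ∈ N` is the preimage of the set where `[u^{n₁}, v^{n₂}] = 1`.
The only difficulty is that these sets are closed but need not be measurable for the product
σ-algebra when `G` is not second countable. The product of two outer regular probability
measures is again outer regular (approximate product-measurable sets from inside by closed and
from outside by open sets, by induction on the σ-algebra), and a compact subset of a product space
can be thickened, inside any open neighbourhood, to a finite union of open boxes. Since
`G × G → (G ⧸ N) × (G ⧸ N)` is a closed map, this lets one compare the outer measures of the two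
sets through open neighbourhoods.
-/

open MeasureTheory Set Function
open scoped ENNReal commutatorElement

namespace MeasureTheory.Measure

section ClosedOpenApprox

variable {X Y : Type*} [TopologicalSpace X] [MeasurableSpace X] [TopologicalSpace Y]
  [MeasurableSpace Y]

def IsClosedOpenApprox (μ : Measure X) (s : Set X) : Prop :=
  ∀ ε > 0, ∃ F U, IsClosed F ∧ IsOpen U ∧ F ⊆ s ∧ s ⊆ U ∧ μ (U \ F) < ε

theorem isClosedOpenApprox_empty (μ : Measure X) : IsClosedOpenApprox μ ∅ :=
  fun ε hε => ⟨∅, ∅, isClosed_empty, isOpen_empty, subset_rfl, subset_rfl, by simpa using hε⟩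

theorem IsClosedOpenApprox.compl {μ : Measure X} {s : Set X} (h : IsClosedOpenApprox μ s) :
    IsClosedOpenApprox μ sᶜ := by
  intro ε hε
  obtain ⟨F, U, hF, hU, hFs, hsU, hμ⟩ := h ε hε
  refine ⟨Uᶜ, Fᶜ, hU.isClosed_compl, hF.isOpen_compl, compl_subset_compl.2 hsU,
    compl_subset_compl.2 hFs, ?_⟩
  rwa [compl_sdiff_compl]

theorem isClosedOpenApprox_of_measurableSet (μ : Measure X) [IsFiniteMeasure μ] [μ.OuterRegular]
    {s : Set X} (hs : MeasurableSet s) : IsClosedOpenApprox μ s := by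
  intro ε hε
  have hε2 : ε / 2 ≠ 0 := (ENNReal.half_pos hε.ne').ne'
  obtain ⟨U, hsU, hU, -, hμU⟩ := hs.exists_isOpen_sdiff_lt (measure_ne_top μ s) hε2
  obtain ⟨V, hsV, hV, -, hμV⟩ := hs.compl.exists_isOpen_sdiff_lt (measure_ne_top μ sᶜ) hε2
  refine ⟨Vᶜ, U, hV.isClosed_compl, hU, compl_subset_comm.1 hsV, hsU, ?_⟩
  calc μ (U \ Vᶜ) ≤ μ (U \ s) + μ (V \ sᶜ) := by
        refine (measure_mono fun x hx => ?_).trans (measure_union_le _ _)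
        by_cases hxs : x ∈ s
        · exact Or.inr ⟨not_not.1 hx.2, not_not.2 hxs⟩
        · exact Or.inl ⟨hx.1, hxs⟩
    _ < ε / 2 + ε / 2 := ENNReal.add_lt_add hμU hμV
    _ = ε := ENNReal.add_halves ε

theorem IsClosedOpenApprox.prod {μ : Measure X} {ν : Measure Y} [IsProbabilityMeasure μ]
    [IsProbabilityMeasure ν] {s : Set X} {t : Set Y} (hs : IsClosedOpenApprox μ s)
    (ht : IsClosedOpenApprox ν t) : IsClosedOpenApprox (μ.prod ν) (s ×ˢ t) := by
  intro ε hε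
  have hε2 : 0 < ε / 2 := ENNReal.half_pos hε.ne'
  obtain ⟨F₁, U₁, hF₁, hU₁, hF₁s, hsU₁, h₁⟩ := hs _ hε2
  obtain ⟨F₂, U₂, hF₂, hU₂, hF₂t, htU₂, h₂⟩ := ht _ hε2
  refine ⟨F₁ ×ˢ F₂, U₁ ×ˢ U₂, hF₁.prod hF₂, hU₁.prod hU₂, Set.prod_mono hF₁s hF₂t,
    Set.prod_mono hsU₁ htU₂, ?_⟩
  calc (μ.prod ν) (U₁ ×ˢ U₂ \ F₁ ×ˢ F₂)
      ≤ μ U₁ * ν (U₂ \ F₂) + μ (U₁ \ F₁) * ν U₂ := by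
        rw [prod_sdiff_prod, ← prod_prod, ← prod_prod]
        exact measure_union_le _ _
    _ ≤ ν (U₂ \ F₂) + μ (U₁ \ F₁) := by
        gcongr
        · exact mul_le_of_le_one_left' prob_le_one
        · exact mul_le_of_le_one_right' prob_le_one
    _ < ε / 2 + ε / 2 := ENNReal.add_lt_add h₂ h₁
    _ = ε := ENNReal.add_halves ε

theorem IsClosedOpenApprox.iUnion {μ : Measure X} [IsFiniteMeasure μ] {f : ℕ → Set X}
    (hd : Pairwise (Disjoint on f)) (hm : ∀ n, MeasurableSet (f n))
    (h : ∀ n, IsClosedOpenApprox μ (f n)) : IsClosedOpenApprox μ (⋃ n, f n) := by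
  intro ε hε
  have hε2 : 0 < ε / 2 := ENNReal.half_pos hε.ne'
  obtain ⟨δ, hδ, hδε⟩ := ENNReal.exists_pos_sum_of_countable' hε2.ne' ℕ
  choose F U hF hU hFf hfU hμ using fun n => h n (δ n) (hδ n)
  have hsum : ∑' n, μ (f n) ≠ ∞ := by
    rw [← measure_iUnion hd hm]
    exact measure_ne_top _ _
  obtain ⟨N, hN⟩ :=
    ((ENNReal.tendsto_sum_nat_add (fun n => μ (f n)) hsum).eventually_lt_const hε2).exists
  refine ⟨⋃ n ∈ Finset.range N, F n, ⋃ n, U n, isClosed_biUnion_finset fun n _ => hF n,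
    isOpen_iUnion hU, iUnion₂_subset fun n _ => (hFf n).trans (subset_iUnion f n),
    iUnion_mono hfU, ?_⟩
  have hsub : (⋃ n, U n) \ ⋃ n ∈ Finset.range N, F n ⊆ (⋃ n, U n \ F n) ∪ ⋃ k, f (k + N) := by
    rintro x ⟨hxU, hxF⟩
    obtain ⟨n, hn⟩ := mem_iUnion.1 hxU
    by_cases hxFn : x ∈ F n
    · have hNn : N ≤ n := not_lt.1 fun hn => hxF (mem_biUnion (Finset.mem_range.2 hn) hxFn)
      exact Or.inr (mem_iUnion.2 ⟨n - N, (Nat.sub_add_cancel hNn).symm ▸ hFf n hxFn⟩)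
    · exact Or.inl (mem_iUnion.2 ⟨n, hn, hxFn⟩)
  calc μ ((⋃ n, U n) \ ⋃ n ∈ Finset.range N, F n)
      ≤ μ (⋃ n, U n \ F n) + μ (⋃ k, f (k + N)) := (measure_mono hsub).trans (measure_union_le _ _)
    _ ≤ ∑' n, μ (U n \ F n) + ∑' k, μ (f (k + N)) := by
        gcongr <;> exact measure_iUnion_le _
    _ ≤ ∑' n, δ n + ∑' k, μ (f (k + N)) := by
        gcongr with n
        exact (hμ n).le
    _ < ε / 2 + ε / 2 := ENNReal.add_lt_add hδε hN
    _ = ε := ENNReal.add_halves ε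

theorem outerRegular_prod [OpensMeasurableSpace X] [OpensMeasurableSpace Y] (μ : Measure X)
    (ν : Measure Y) [IsProbabilityMeasure μ] [IsProbabilityMeasure ν] [μ.OuterRegular]
    [ν.OuterRegular] : (μ.prod ν).OuterRegular := by
  have happrox : ∀ s, MeasurableSet s → IsClosedOpenApprox (μ.prod ν) s := by
    refine MeasurableSpace.induction_on_inter (C := fun s _ => IsClosedOpenApprox (μ.prod ν) s)
      generateFrom_prod.symm isPiSystem_prod (isClosedOpenApprox_empty _) ?_
      (fun _ _ h => h.compl) (fun _ hd hm h => .iUnion hd hm h)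
    rintro _ ⟨s, hs, t, ht, rfl⟩
    exact (isClosedOpenApprox_of_measurableSet μ hs).prod (isClosedOpenApprox_of_measurableSet ν ht)
  refine ⟨fun s hs r hr => ?_⟩
  obtain ⟨F, U, -, hU, hFs, hsU, hμ⟩ := happrox s hs (r - μ.prod ν s) (tsub_pos_of_lt hr)
  refine ⟨U, hsU, hU, ?_⟩
  calc μ.prod ν U ≤ μ.prod ν s + μ.prod ν (U \ F) :=
        (measure_mono fun x hx => (em (x ∈ s)).imp id fun hxs => ⟨hx, fun hxF => hxs (hFs hxF)⟩)
          |>.trans (measure_union_le _ _)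
    _ < μ.prod ν s + (r - μ.prod ν s) := ENNReal.add_lt_add_left (measure_ne_top _ _) hμ
    _ = r := add_tsub_cancel_of_le hr.le

end ClosedOpenApprox

theorem _root_.IsCompact.exists_measurableSet_subset_prod {X Y : Type*} [TopologicalSpace X]
    [MeasurableSpace X] [OpensMeasurableSpace X] [TopologicalSpace Y] [MeasurableSpace Y]
    [OpensMeasurableSpace Y] {K W : Set (X × Y)} (hK : IsCompact K) (hW : IsOpen W)
    (hKW : K ⊆ W) : ∃ E, MeasurableSet E ∧ K ⊆ E ∧ E ⊆ W := by
  have hbox : ∀ p ∈ K, ∃ u v, IsOpen u ∧ IsOpen v ∧ p.1 ∈ u ∧ p.2 ∈ v ∧ u ×ˢ v ⊆ W :=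
    fun p hp => isOpen_prod_iff.1 hW p.1 p.2 (hKW hp)
  choose u v hu hv hpu hpv huvW using hbox
  obtain ⟨t, ht⟩ := hK.elim_nhds_subcover' (fun p hp => u p hp ×ˢ v p hp) fun p hp =>
    ((hu p hp).prod (hv p hp)).mem_nhds ⟨hpu p hp, hpv p hp⟩
  refine ⟨⋃ p ∈ t, u p p.2 ×ˢ v p p.2, t.measurableSet_biUnion fun p _ => ?_, ht,
    iUnion₂_subset fun p _ => huvW p p.2⟩
  exact (hu p p.2).measurableSet.prod (hv p p.2).measurableSet

theorem map_apply_of_isClosedMap_of_isCompact {α X Y : Type*} [TopologicalSpace α]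
    [MeasurableSpace α] [TopologicalSpace X] [MeasurableSpace X] [OpensMeasurableSpace X]
    [TopologicalSpace Y] [MeasurableSpace Y] [OpensMeasurableSpace Y] (μ : Measure α)
    [μ.OuterRegular] {f : α → X × Y} (hf : Measurable f) (hfc : IsClosedMap f)
    {K : Set (X × Y)} (hK : IsCompact K) : μ.map f K = μ (f ⁻¹' K) := by
  refine le_antisymm ?_ (le_map_apply hf.aemeasurable K)
  rw [Set.measure_eq_iInf_isOpen (f ⁻¹' K)]
  refine le_iInf₂ fun U hKU => le_iInf fun hU => ?_
  -- `(f '' Uᶜ)ᶜ` is an open neighbourhood of `K` whose preimage lies in `U`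
  obtain ⟨E, hE, hKE, hEU⟩ := hK.exists_measurableSet_subset_prod
    (hfc _ hU.isClosed_compl).isOpen_compl
    fun y hy ⟨x, hxU, hxy⟩ => hxU (hKU (by rwa [mem_preimage, hxy]))
  calc μ.map f K ≤ μ.map f E := measure_mono hKE
    _ = μ (f ⁻¹' E) := map_apply hf hE
    _ ≤ μ U := measure_mono fun x hx => by_contra fun hxU => hEU hx ⟨x, hxU, rfl⟩

end MeasureTheory.Measure

theorem QuotientGroup.commute_mk_iff {G : Type*} [Group G] {N : Subgroup G} [N.Normal] {a b : G} :
    Commute (a : G ⧸ N) b ↔ ⁅a, b⁆ ∈ N := by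
  rw [Commute, SemiconjBy, ← mk_mul, ← mk_mul, eq_iff_div_mem, commutatorElement_def,
    div_eq_mul_inv, mul_inv_rev, ← mul_assoc]

theorem MeasureTheory.Measure.map_quotientMk'_eq_of_isHaarMeasure {G : Type*} [Group G]
    [TopologicalSpace G] [IsTopologicalGroup G] [CompactSpace G] [MeasurableSpace G]
    [BorelSpace G] (N : Subgroup G) [N.Normal] [MeasurableSpace (G ⧸ N)] [BorelSpace (G ⧸ N)]
    (ν : Measure G) [ν.IsHaarMeasure] [IsProbabilityMeasure ν] (ν' : Measure (G ⧸ N))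
    [ν'.IsHaarMeasure] [IsProbabilityMeasure ν'] : ν.map (QuotientGroup.mk' N) = ν' := by
  have hπ : Continuous (QuotientGroup.mk' N) := continuous_quotient_mk'
  have := isHaarMeasure_map_of_isFiniteMeasure ν _ hπ (QuotientGroup.mk'_surjective N)
  have := isProbabilityMeasure_map (μ := ν) hπ.measurable.aemeasurable
  exact isHaarMeasure_eq_of_isProbabilityMeasure _ _

/-- Let `G` be a compact group, `N` a closed normal subgroup and `n₁ n₂` natural numbers.
The probability that `[x^{n₁}, y^{n₂}] ∈ N` for Haar-random `x, y ∈ G` equals the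
probability that `[u^{n₁}, v^{n₂}] = 1` for Haar-random `u, v ∈ G/N`; in particular the
generalized commutativity degree of `G/N` is at least that of `G`. -/
theorem generalized_commutativity_degree_quotient {G : Type*} [Group G] [TopologicalSpace G]
    [IsTopologicalGroup G] [CompactSpace G] [MeasurableSpace G] [BorelSpace G]
    (N : Subgroup G) [N.Normal] (hN : IsClosed (N : Set G)) (n₁ n₂ : ℕ)
    [MeasurableSpace (G ⧸ N)] [BorelSpace (G ⧸ N)]
    (ν : Measure G) [ν.IsHaarMeasure] [IsProbabilityMeasure ν]
    (ν' : Measure (G ⧸ N)) [ν'.IsHaarMeasure] [IsProbabilityMeasure ν'] :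
    (ν.prod ν) {p : G × G | p.1 ^ n₁ * p.2 ^ n₂ * (p.1 ^ n₁)⁻¹ * (p.2 ^ n₂)⁻¹ ∈ N} =
        (ν'.prod ν') {q : (G ⧸ N) × (G ⧸ N) | q.1 ^ n₁ * q.2 ^ n₂ = q.2 ^ n₂ * q.1 ^ n₁} ∧
      (ν.prod ν) {p : G × G | p.1 ^ n₁ * p.2 ^ n₂ = p.2 ^ n₂ * p.1 ^ n₁} ≤
        (ν'.prod ν') {q : (G ⧸ N) × (G ⧸ N) | q.1 ^ n₁ * q.2 ^ n₂ = q.2 ^ n₂ * q.1 ^ n₁} := by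
  have : IsClosed (N : Set G) := hN
  set π := QuotientGroup.mk' N
  have hπ : Continuous π := continuous_quotient_mk'
  have hprod : ν'.prod ν' = (ν.prod ν).map (Prod.map π π) := by
    rw [← Measure.map_quotientMk'_eq_of_isHaarMeasure N ν ν',
      Measure.map_prod_map _ _ hπ.measurable hπ.measurable]
  have hcompact : IsCompact {q : (G ⧸ N) × (G ⧸ N) | q.1 ^ n₁ * q.2 ^ n₂ = q.2 ^ n₂ * q.1 ^ n₁} :=
    (isClosed_eq (by fun_prop) (by fun_prop)).isCompact
  have := Measure.outerRegular_prod ν ν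
  have key : (ν.prod ν) {p : G × G | p.1 ^ n₁ * p.2 ^ n₂ * (p.1 ^ n₁)⁻¹ * (p.2 ^ n₂)⁻¹ ∈ N} =
      (ν'.prod ν') {q : (G ⧸ N) × (G ⧸ N) | q.1 ^ n₁ * q.2 ^ n₂ = q.2 ^ n₂ * q.1 ^ n₁} := by
    rw [hprod, Measure.map_apply_of_isClosedMap_of_isCompact _
      (hπ.measurable.prodMap hπ.measurable) ((hπ.prodMap hπ).isClosedMap) hcompact]
    congr 1
    ext p
    exact (QuotientGroup.commute_mk_iff (N := N) (a := p.1 ^ n₁) (b := p.2 ^ n₂)).symm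
  refine ⟨key, key ▸ measure_mono fun p (hp : _ = _) => ?_⟩
  simp [hp, N.one_mem]
end
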